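/- Let z : [0,δ) → ℝ be twice continuously differentiable with z'(0) = 0, and suppose that for all r ∈ (0,δ), z''(r) = [r(1+z'(r)²)² / (r√(1+z'(r)²) − 2τ z'(r))] · (c(r) − z'(r)/(r√(1+z'(r)²))), where c : [0,δ) → ℝ is continuous and τ > 0. Then z''(0) satisfies the quadratic equation 2τ (z''(0))² − 2 z''(0) + c(0) = 0. -/

import Mathlib

open Set Real Filter Topology

/-!
Near `r = 0` the quotient `z'(r)/r` tends to `z''(0)`, so `z'(r) → 0` and, after multiplying
the ODE by `√(1 + z'²) − 2τ z'/r`, both sides have limits: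
`z''(0)(1 − 2τ z''(0)) = c(0) − z''(0)`.
The only subtlety is that the denominator `r√(1 + z'²) − 2τ z'` must be eventually nonzero:
if `z''(0) ≠ 0` this holds because a vanishing denominator forces `z'' = 0` (Lean's `x / 0 = 0`),
and if `z''(0) = 0` because the denominator divided by `r` tends to `1`.
-/

theorem tendsto_div_nhdsGT_of_hasDerivWithinAt {f : ℝ → ℝ} {f' : ℝ}
    (hf : HasDerivWithinAt f f' (Ioi 0) 0) (h0 : f 0 = 0) :
    Tendsto (fun r => f r / r) (𝓝[>] 0) (𝓝 f') := by
  refine ((hasDerivWithinAt_iff_tendsto_slope' (lt_irrefl 0)).1 hf).congr fun r => ?_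
  simp [slope_def_field, h0]

-- The ODE reads `z'' r = interfaceRHS τ r (z' r) (c r)`.
noncomputable def interfaceRHS (τ r p c : ℝ) : ℝ :=
  r * (1 + p ^ 2) ^ 2 / (r * √(1 + p ^ 2) - 2 * τ * p) * (c - p / (r * √(1 + p ^ 2)))

theorem interfaceRHS_of_denom_eq_zero {τ r p c : ℝ} (hD : r * √(1 + p ^ 2) - 2 * τ * p = 0) :
    interfaceRHS τ r p c = 0 := by
  simp [interfaceRHS, hD]

theorem mul_sub_div_eq_of_eq_div {τ r s p q c X : ℝ} (hr : r ≠ 0) (hs : s ≠ 0)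
    (hD : r * s - 2 * τ * p ≠ 0) (h : q = r * X / (r * s - 2 * τ * p) * (c - p / (r * s))) :
    q * (s - 2 * τ * (p / r)) = X * (c - p / r / s) := by
  have hg : s - 2 * τ * (p / r) = (r * s - 2 * τ * p) / r := by field_simp
  rw [h, hg]
  field_simp

theorem quadratic_of_tendsto_of_eventually_eq_interfaceRHS {τ a c₀ : ℝ} {p q c : ℝ → ℝ}
    (hp : Tendsto (fun r => p r / r) (𝓝[>] 0) (𝓝 a)) (hq : Tendsto q (𝓝[>] 0) (𝓝 a))
    (hc : Tendsto c (𝓝[>] 0) (𝓝 c₀))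
    (hODE : ∀ᶠ r in 𝓝[>] 0, q r = interfaceRHS τ r (p r) (c r)) :
    2 * τ * a ^ 2 - 2 * a + c₀ = 0 := by
  have hpos : ∀ᶠ r in 𝓝[>] (0 : ℝ), 0 < r := self_mem_nhdsWithin
  have hp₀ : Tendsto p (𝓝[>] 0) (𝓝 0) := by
    have h := hp.mul (tendsto_nhdsWithin_of_tendsto_nhds tendsto_id)
    rw [mul_zero] at h
    refine h.congr' ?_
    filter_upwards [hpos] with r hr using div_mul_cancel₀ _ hr.ne'
  have hs : Tendsto (fun r => √(1 + p r ^ 2)) (𝓝[>] 0) (𝓝 1) := by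
    simpa using ((tendsto_const_nhds (x := (1 : ℝ))).add (hp₀.pow 2)).sqrt
  have hg : Tendsto (fun r => √(1 + p r ^ 2) - 2 * τ * (p r / r)) (𝓝[>] 0)
      (𝓝 (1 - 2 * τ * a)) :=
    hs.sub (hp.const_mul _)
  have hD : ∀ᶠ r in 𝓝[>] 0, r * √(1 + p r ^ 2) - 2 * τ * p r ≠ 0 := by
    by_cases ha : a = 0
    · have hlim : (1 : ℝ) - 2 * τ * a ≠ 0 := by simp [ha]
      filter_upwards [hg.eventually_ne hlim, hpos] with r hgr hr
      have hrg : r * √(1 + p r ^ 2) - 2 * τ * p r =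
          r * (√(1 + p r ^ 2) - 2 * τ * (p r / r)) := by
        field_simp
      rw [hrg]
      exact mul_ne_zero hr.ne' hgr
    · filter_upwards [hq.eventually_ne ha, hODE] with r hqr hqODE hDr
      exact hqr (hqODE.trans (interfaceRHS_of_denom_eq_zero hDr))
  have hid : ∀ᶠ r in 𝓝[>] 0, (1 + p r ^ 2) ^ 2 * (c r - p r / r / √(1 + p r ^ 2)) =
      q r * (√(1 + p r ^ 2) - 2 * τ * (p r / r)) := by
    filter_upwards [hpos, hD, hODE] with r hr hDr hqODE
    exact (mul_sub_div_eq_of_eq_div hr.ne' (by positivity) hDr hqODE).symm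
  have hrhs : Tendsto (fun r => (1 + p r ^ 2) ^ 2 * (c r - p r / r / √(1 + p r ^ 2))) (𝓝[>] 0)
      (𝓝 ((1 + 0 ^ 2) ^ 2 * (c₀ - a / 1))) :=
    ((tendsto_const_nhds.add (hp₀.pow 2)).pow 2).mul (hc.sub (hp.div hs one_ne_zero))
  have key := tendsto_nhds_unique (hrhs.congr' hid) (hq.mul hg)
  linear_combination key

theorem stmt_4_general (τ δ : ℝ) (hδ : 0 < δ)
    (z' z'' c : ℝ → ℝ)
    (hz'' : ∀ r ∈ Ico (0 : ℝ) δ, HasDerivWithinAt z' (z'' r) (Ico 0 δ) r)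
    (hz''cont : ContinuousOn z'' (Ico 0 δ))
    (hccont : ContinuousOn c (Ico 0 δ))
    (hz'0 : z' 0 = 0)
    (hODE : ∀ r ∈ Ioo (0 : ℝ) δ,
      z'' r = (r * (1 + (z' r) ^ 2) ^ 2 /
          (r * Real.sqrt (1 + (z' r) ^ 2) - 2 * τ * z' r)) *
        (c r - z' r / (r * Real.sqrt (1 + (z' r) ^ 2)))) :
    2 * τ * (z'' 0) ^ 2 - 2 * z'' 0 + c 0 = 0 := by
  have h₀ : (0 : ℝ) ∈ Ico 0 δ := ⟨le_rfl, hδ⟩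
  have hGT : 𝓝[>] (0 : ℝ) ≤ 𝓝[Ico 0 δ] 0 := nhdsWithin_le_of_mem (Ico_mem_nhdsGT hδ)
  refine quadratic_of_tendsto_of_eventually_eq_interfaceRHS
    (tendsto_div_nhdsGT_of_hasDerivWithinAt
      ((hz'' 0 h₀).mono_of_mem_nhdsWithin (Ico_mem_nhdsGT hδ)) hz'0)
    ((hz''cont 0 h₀).mono_left hGT) ((hccont 0 h₀).mono_left hGT) ?_
  filter_upwards [Ioo_mem_nhdsGT hδ] with r hr using hODE r hr

/-- If `z` is twice continuously differentiable on `[0,δ)` with `z'(0) = 0` and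
satisfies the disconnected-interface ODE
`z'' = [r(1+z'²)²/(r√(1+z'²) − 2τ z')]·(c(r) − z'/(r√(1+z'²)))` on `(0,δ)`
with `c` continuous and `τ > 0`, then `z''(0)` satisfies
`2τ (z''(0))² − 2 z''(0) + c(0) = 0`. -/
theorem stmt_4 (τ δ : ℝ) (hτ : 0 < τ) (hδ : 0 < δ)
    (z z' z'' c : ℝ → ℝ)
    (hz' : ∀ r ∈ Ico (0 : ℝ) δ, HasDerivWithinAt z (z' r) (Ico 0 δ) r)
    (hz'' : ∀ r ∈ Ico (0 : ℝ) δ, HasDerivWithinAt z' (z'' r) (Ico 0 δ) r)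
    (hz''cont : ContinuousOn z'' (Ico 0 δ))
    (hccont : ContinuousOn c (Ico 0 δ))
    (hz'0 : z' 0 = 0)
    (hODE : ∀ r ∈ Ioo (0 : ℝ) δ,
      z'' r = (r * (1 + (z' r) ^ 2) ^ 2 /
          (r * Real.sqrt (1 + (z' r) ^ 2) - 2 * τ * z' r)) *
        (c r - z' r / (r * Real.sqrt (1 + (z' r) ^ 2)))) :
    2 * τ * (z'' 0) ^ 2 - 2 * z'' 0 + c 0 = 0 :=
  stmt_4_general τ δ hδ z' z'' c hz'' hz''cont hccont hz'0 hODE
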